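/- arXiv:1912.07804 — 5 statements merged into one kernel-verified Lean document; each statement's English description precedes it below -/
import Mathlib

section
/- Let φ be an LTLf formula over a set P of atomic propositions, and let ψ = t(φ) ∧ alive ∧ (alive U G¬alive) be its translated LTL formula over P ∪ {alive}. For every nonempty finite trace τ over P and every infinite trace τ' over P ∪ {alive} with τ ≈ τ', it holds that τ ⊨ φ if and only if τ' ⊨ ψ. -/
namespace LTLfSynth

/-! ### Syntax of LTL / LTLf formulas -/

/-- Syntax of LTL / LTLf formulas over atomic propositions `P`
(with the standard abbreviation `true` included as a constant). -/
inductive Formula (P : Type) : Type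
  | tt : Formula P
  | atom : P → Formula P
  | not : Formula P → Formula P
  | and : Formula P → Formula P → Formula P
  | next : Formula P → Formula P
  | until_ : Formula P → Formula P → Formula P

namespace Formula

/-- LTLf satisfaction at position `i` of a finite trace `ρ` (a list of subsets of `P`). -/
def finSatAt {P : Type} (ρ : List (Set P)) : Formula P → ℕ → Prop
  | tt, _ => True
  | atom a, i => a ∈ ρ.getD i ∅
  | not φ, i => ¬ finSatAt ρ φ i
  | and φ ψ, i => finSatAt ρ φ i ∧ finSatAt ρ ψ i
  | next φ, i => i + 1 < ρ.length ∧ finSatAt ρ φ (i + 1)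
  | until_ φ ψ, i => ∃ j, i ≤ j ∧ j < ρ.length ∧ finSatAt ρ ψ j ∧
      ∀ k, i ≤ k → k < j → finSatAt ρ φ k

/-- `ρ ⊨ φ` for a finite trace. -/
def finSat {P : Type} (ρ : List (Set P)) (φ : Formula P) : Prop := finSatAt ρ φ 0

/-- LTL satisfaction at position `i` of an infinite trace `ρ : ℕ → Set P`. -/
def infSatAt {P : Type} (ρ : ℕ → Set P) : Formula P → ℕ → Prop
  | tt, _ => True
  | atom a, i => a ∈ ρ i
  | not φ, i => ¬ infSatAt ρ φ i
  | and φ ψ, i => infSatAt ρ φ i ∧ infSatAt ρ ψ i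
  | next φ, i => infSatAt ρ φ (i + 1)
  | until_ φ ψ, i => ∃ j, i ≤ j ∧ infSatAt ρ ψ j ∧
      ∀ k, i ≤ k → k < j → infSatAt ρ φ k

/-- `ρ ⊨ φ` for an infinite trace. -/
def infSat {P : Type} (ρ : ℕ → Set P) (φ : Formula P) : Prop := infSatAt ρ φ 0

/-- `F φ = true U φ`. -/
def F {P : Type} (φ : Formula P) : Formula P := until_ tt φ

/-- `G φ = ¬ F ¬ φ`. -/
def G {P : Type} (φ : Formula P) : Formula P := not (F (not φ))

/-- `φ ∨ ψ`. -/
def or {P : Type} (φ ψ : Formula P) : Formula P := not (and (not φ) (not ψ))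

/-- `φ → ψ`. -/
def imp {P : Type} (φ ψ : Formula P) : Formula P := or (not φ) ψ

/-- Atom renaming. -/
def map {P Q : Type} (f : P → Q) : Formula P → Formula Q
  | tt => tt
  | atom a => atom (f a)
  | not φ => not (map f φ)
  | and φ ψ => and (map f φ) (map f ψ)
  | next φ => next (map f φ)
  | until_ φ ψ => until_ (map f φ) (map f ψ)

end Formula

/-! ### The LTLf-to-LTL translation with the fresh atom `alive` (modeled as `none`) -/

/-- The fresh atom `alive` over `P ∪ {alive}`, modeled as `Option P` with `alive = none`. -/
def alive {P : Type} : Formula (Option P) := Formula.atom none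

/-- The translation `t` from LTLf over `P` to LTL over `P ∪ {alive}`. -/
def t {P : Type} : Formula P → Formula (Option P)
  | .tt => .tt
  | .atom a => .atom (some a)
  | .not φ => .not (t φ)
  | .and φ ψ => .and (t φ) (t ψ)
  | .next φ => .next (.and alive (t φ))
  | .until_ φ ψ => .until_ (t φ) (.and alive (t ψ))

/-- `ψ = t(φ) ∧ alive ∧ (alive U G ¬alive)`. -/
def transLTL {P : Type} (φ : Formula P) : Formula (Option P) :=
  .and (t φ) (.and alive (.until_ alive (Formula.G (.not alive))))

/-- Extension equivalence `τ ≈ τ'`: `τ'(i) = τ[i] ∪ {alive}` for `i < |τ|` and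
`τ'(i) = ∅` for `i ≥ |τ|`. -/
def extEquiv {P : Type} (τ : List (Set P)) (τ' : ℕ → Set (Option P)) : Prop :=
  (∀ i, i < τ.length → τ' i = insert none (Option.some '' τ.getD i ∅)) ∧
  (∀ i, τ.length ≤ i → τ' i = ∅)

/-! ### Boolean formulas (environment constraints) -/

/-- Boolean (propositional) formulas over variables `V`. -/
inductive BForm (V : Type) : Type
  | tt : BForm V
  | atom : V → BForm V
  | not : BForm V → BForm V
  | and : BForm V → BForm V → BForm V

namespace BForm

/-- `X ⊨ α` for an assignment `X ⊆ V`. -/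
def eval {V : Type} (X : Set V) : BForm V → Prop
  | tt => True
  | atom v => v ∈ X
  | not b => ¬ eval X b
  | and b c => eval X b ∧ eval X c

/-- View a Boolean formula as a temporal formula, relocating the atoms by `emb`. -/
def toFormula {V P : Type} (emb : V → P) : BForm V → Formula P
  | tt => .tt
  | atom v => .atom (emb v)
  | not b => .not (toFormula emb b)
  | and b c => .and (toFormula emb b) (toFormula emb c)

end BForm

/-! ### Traces, strategies and plays over a DFA arena -/

/-- Combine an environment assignment `X ⊆ Vx` with an agent assignment `Y ⊆ Vy` into
an assignment over `X ∪ Y` (modeled as `Vx ⊕ Vy`). -/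
def combine {Vx Vy : Type} (X : Set Vx) (Y : Set Vy) : Set (Vx ⊕ Vy) :=
  {v | Sum.elim (· ∈ X) (· ∈ Y) v}

/-- The history `[a₀, …, a_{j-1}]` of a sequence. -/
def histList {A : Type} (lam : ℕ → A) (j : ℕ) : List A :=
  (List.range j).map lam

/-- A sequence of environment assignments is `α`-fair if `α` holds infinitely often. -/
def fairSeq {Vx : Type} (α : BForm Vx) (lam : ℕ → Set Vx) : Prop :=
  ∀ n, ∃ j, n ≤ j ∧ α.eval (lam j)

/-- A sequence of environment assignments is `α`-stable if `α` holds at all but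
finitely many positions. -/
def stableSeq {Vx : Type} (α : BForm Vx) (lam : ℕ → Set Vx) : Prop :=
  ∃ n, ∀ j, n ≤ j → α.eval (lam j)

/-- The state visited at round `j` of the play from `s` induced by environment sequence
`lam` and agent strategy `g`. -/
def playState {Vx Vy S : Type} (δ : S → Set (Vx ⊕ Vy) → S) (g : List (Set Vx) → Set Vy)
    (s : S) (lam : ℕ → Set Vx) : ℕ → S
  | 0 => s
  | j + 1 => δ (playState δ g s lam j) (combine (lam j) (g (histList lam (j + 1))))

/-- The state visited at round `j` of the play from `s` in which the environment follows
strategy `h` (so `X_j = h (Y₀, …, Y_{j-1})`) and the agent plays the sequence `mu`. -/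
def envPlayState {Vx Vy S : Type} (δ : S → Set (Vx ⊕ Vy) → S) (h : List (Set Vy) → Set Vx)
    (s : S) (mu : ℕ → Set Vy) : ℕ → S
  | 0 => s
  | j + 1 => δ (envPlayState δ h s mu j) (combine (h (histList mu j)) (mu j))

/-- `s` is an agent winning state of the fair DFA game `⟨G, α⟩`. -/
def agentWinsFairFrom {Vx Vy S : Type} (δ : S → Set (Vx ⊕ Vy) → S) (Acc : Set S)
    (α : BForm Vx) (s : S) : Prop :=
  ∃ g : List (Set Vx) → Set Vy, ∀ lam : ℕ → Set Vx,
    ¬ fairSeq α lam ∨ ∃ j, playState δ g s lam j ∈ Acc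

/-- `s` is an agent winning state of the stable DFA game `⟨G, α⟩`. -/
def agentWinsStableFrom {Vx Vy S : Type} (δ : S → Set (Vx ⊕ Vy) → S) (Acc : Set S)
    (α : BForm Vx) (s : S) : Prop :=
  ∃ g : List (Set Vx) → Set Vy, ∀ lam : ℕ → Set Vx,
    ¬ stableSeq α lam ∨ ∃ j, playState δ g s lam j ∈ Acc

/-- `s` is an environment winning state of the fair DFA game `⟨G, α⟩`. -/
def envWinsFairFrom {Vx Vy S : Type} (δ : S → Set (Vx ⊕ Vy) → S) (Acc : Set S)
    (α : BForm Vx) (s : S) : Prop :=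
  ∃ h : List (Set Vy) → Set Vx, ∀ mu : ℕ → Set Vy,
    fairSeq α (fun j => h (histList mu j)) ∧ ∀ j, envPlayState δ h s mu j ∉ Acc

/-- `s` is an environment winning state of the stable DFA game `⟨G, α⟩`. -/
def envWinsStableFrom {Vx Vy S : Type} (δ : S → Set (Vx ⊕ Vy) → S) (Acc : Set S)
    (α : BForm Vx) (s : S) : Prop :=
  ∃ h : List (Set Vy) → Set Vx, ∀ mu : ℕ → Set Vy,
    stableSeq α (fun j => h (histList mu j)) ∧ ∀ j, envPlayState δ h s mu j ∉ Acc

/-! ### The fixpoint computations -/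

section Fixpoints

variable {Vx Vy S : Type} (δ : S → Set (Vx ⊕ Vy) → S) (Acc : Set S) (α : BForm Vx)

/-- `{s | ∃X ∀Y, (X ⊨ α ∧ δ(s, X∪Y) ∈ A ∖ Acc) ∨ δ(s, X∪Y) ∈ B ∖ Acc}`. -/
def envStep (A B : Set S) : Set S :=
  {s | ∃ X : Set Vx, ∀ Y : Set Vy,
    (α.eval X ∧ δ s (combine X Y) ∈ A \ Acc) ∨ δ s (combine X Y) ∈ B \ Acc}

/-- `{s | ∀X ∃Y, (X ⊭ α ∨ δ(s, X∪Y) ∈ A ∪ Acc) ∧ δ(s, X∪Y) ∈ B ∪ Acc}`. -/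
def sysStep (A B : Set S) : Set S :=
  {s | ∀ X : Set Vx, ∃ Y : Set Vy,
    (¬ α.eval X ∨ δ s (combine X Y) ∈ A ∪ Acc) ∧ δ s (combine X Y) ∈ B ∪ Acc}

lemma envStep_mono {A₁ A₂ B₁ B₂ : Set S} (hA : A₁ ⊆ A₂) (hB : B₁ ⊆ B₂) :
    envStep δ Acc α A₁ B₁ ⊆ envStep δ Acc α A₂ B₂ := by
  rintro s ⟨X, hX⟩
  refine ⟨X, fun Y => ?_⟩
  rcases hX Y with ⟨h1, h2, h3⟩ | ⟨h2, h3⟩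
  · exact Or.inl ⟨h1, hA h2, h3⟩
  · exact Or.inr ⟨hB h2, h3⟩

lemma sysStep_mono {A₁ A₂ B₁ B₂ : Set S} (hA : A₁ ⊆ A₂) (hB : B₁ ⊆ B₂) :
    sysStep δ Acc α A₁ B₁ ⊆ sysStep δ Acc α A₂ B₂ := by
  intro s hs X
  obtain ⟨Y, h1, h2⟩ := hs X
  refine ⟨Y, ?_, ?_⟩
  · rcases h1 with h | h | h
    · exact Or.inl h
    · exact Or.inr (Or.inl (hA h))
    · exact Or.inr (Or.inr h)
  · rcases h2 with h | h
    · exact Or.inl (hB h)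
    · exact Or.inr h

/-- Inner fixpoint operator `Ẑ ↦ envStep Z Ẑ` (for `Env_f`). -/
def envFairInner (Z : Set S) : Set S →o Set S :=
  ⟨fun Zh => envStep δ Acc α Z Zh, fun _ _ h => envStep_mono δ Acc α subset_rfl h⟩

/-- Outer operator `Z ↦ μẐ. envStep Z Ẑ` (for `Env_f`). -/
def envFairOuter : Set S →o Set S :=
  ⟨fun Z => OrderHom.lfp (envFairInner δ Acc α Z),
   fun _ _ h => OrderHom.lfp.monotone fun _ => envStep_mono δ Acc α h subset_rfl⟩

/-- `Env_f = νZ. μẐ. {s | ∃X ∀Y, (X ⊨ α ∧ δ(s,X∪Y) ∈ Z∖Acc) ∨ δ(s,X∪Y) ∈ Ẑ∖Acc}`. -/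
def EnvFair : Set S := OrderHom.gfp (envFairOuter δ Acc α)

/-- Inner fixpoint operator `Ẑ ↦ sysStep Z Ẑ` (for `Sys_f`). -/
def sysFairInner (Z : Set S) : Set S →o Set S :=
  ⟨fun Zh => sysStep δ Acc α Z Zh, fun _ _ h => sysStep_mono δ Acc α subset_rfl h⟩

/-- Outer operator `Z ↦ νẐ. sysStep Z Ẑ` (for `Sys_f`). -/
def sysFairOuter : Set S →o Set S :=
  ⟨fun Z => OrderHom.gfp (sysFairInner δ Acc α Z),
   fun _ _ h => OrderHom.gfp.monotone fun _ => sysStep_mono δ Acc α h subset_rfl⟩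

/-- `Sys_f = μZ. νẐ. {s | ∀X ∃Y, (X ⊭ α ∨ δ(s,X∪Y) ∈ Z∪Acc) ∧ δ(s,X∪Y) ∈ Ẑ∪Acc}`. -/
def SysFair : Set S := OrderHom.lfp (sysFairOuter δ Acc α)

/-- Inner fixpoint operator `Ẑ ↦ envStep Ẑ Z` (for `Env_st`). -/
def envStInner (Z : Set S) : Set S →o Set S :=
  ⟨fun Zh => envStep δ Acc α Zh Z, fun _ _ h => envStep_mono δ Acc α h subset_rfl⟩

/-- Outer operator `Z ↦ νẐ. envStep Ẑ Z` (for `Env_st`). -/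
def envStOuter : Set S →o Set S :=
  ⟨fun Z => OrderHom.gfp (envStInner δ Acc α Z),
   fun _ _ h => OrderHom.gfp.monotone fun _ => envStep_mono δ Acc α subset_rfl h⟩

/-- `Env_st = μZ. νẐ. {s | ∃X ∀Y, (X ⊨ α ∧ δ(s,X∪Y) ∈ Ẑ∖Acc) ∨ δ(s,X∪Y) ∈ Z∖Acc}`. -/
def EnvSt : Set S := OrderHom.lfp (envStOuter δ Acc α)

/-- Inner fixpoint operator `Ẑ ↦ sysStep Ẑ Z` (for `Sys_st`). -/
def sysStInner (Z : Set S) : Set S →o Set S :=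
  ⟨fun Zh => sysStep δ Acc α Zh Z, fun _ _ h => sysStep_mono δ Acc α h subset_rfl⟩

/-- Outer operator `Z ↦ μẐ. sysStep Ẑ Z` (for `Sys_st`). -/
def sysStOuter : Set S →o Set S :=
  ⟨fun Z => OrderHom.lfp (sysStInner δ Acc α Z),
   fun _ _ h => OrderHom.lfp.monotone fun _ => sysStep_mono δ Acc α subset_rfl h⟩

/-- `Sys_st = νZ. μẐ. {s | ∀X ∃Y, (X ⊭ α ∨ δ(s,X∪Y) ∈ Ẑ∪Acc) ∧ δ(s,X∪Y) ∈ Z∪Acc}`. -/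
def SysSt : Set S := OrderHom.gfp (sysStOuter δ Acc α)

end Fixpoints

/-! ### Strategy extraction -/

/-- Approximates `Z₀ = ∅`,
`Z_{i+1} = {s | ∀X ∃Y, (X ⊭ α ∨ δ(s,X∪Y) ∈ Z_i ∪ Acc) ∧ δ(s,X∪Y) ∈ Sys_f ∪ Acc}`. -/
def fairApprox {Vx Vy S : Type} (δ : S → Set (Vx ⊕ Vy) → S) (Acc : Set S) (α : BForm Vx) :
    ℕ → Set S
  | 0 => ∅
  | i + 1 => sysStep δ Acc α (fairApprox δ Acc α i) (SysFair δ Acc α)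

/-- One step of the arena under output function `ω`: `δ(s, X ∪ ω(s, X))`. -/
def stepWith {Vx Vy S : Type} (δ : S → Set (Vx ⊕ Vy) → S) (ω : S → Set Vx → Set Vy)
    (s : S) (X : Set Vx) : S :=
  δ s (combine X (ω s X))

/-- The strategy generated by an output function `ω` from `s₀`:
`g(X₀,…,X_j) = ω(t_j, X_j)` where `t₀ = s₀` and `t_{k+1} = δ(t_k, X_k ∪ ω(t_k, X_k))`. -/
def genStrategy {Vx Vy S : Type} (δ : S → Set (Vx ⊕ Vy) → S) (ω : S → Set Vx → Set Vy)
    (s₀ : S) (l : List (Set Vx)) : Set Vy :=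
  ω (l.dropLast.foldl (stepWith δ ω) s₀) (l.getLast?.getD ∅)

/-- Admissibility of an output function for the fair game: for every `i`, every
non-accepting `s ∈ Z_{i+1} ∖ Z_i` and every `X`, the value `Y = ω(s, X)` satisfies
`(X ⊭ α ∨ δ(s,X∪Y) ∈ Z_i ∪ Acc) ∧ δ(s,X∪Y) ∈ Sys_f ∪ Acc`. -/
def AdmissibleFair {Vx Vy S : Type} (δ : S → Set (Vx ⊕ Vy) → S) (Acc : Set S)
    (α : BForm Vx) (ω : S → Set Vx → Set Vy) : Prop :=
  ∀ i : ℕ, ∀ s ∈ fairApprox δ Acc α (i + 1), s ∉ fairApprox δ Acc α i → s ∉ Acc →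
    ∀ X : Set Vx,
      (¬ α.eval X ∨ stepWith δ ω s X ∈ fairApprox δ Acc α i ∪ Acc) ∧
        stepWith δ ω s X ∈ SysFair δ Acc α ∪ Acc

/-- `W = νZ. {s | ∀X ∃Y, (X ⊭ α ∨ δ(s,X∪Y) ∈ Sys_st ∪ Acc) ∧ δ(s,X∪Y) ∈ Z ∪ Acc}`. -/
def Wst {Vx Vy S : Type} (δ : S → Set (Vx ⊕ Vy) → S) (Acc : Set S) (α : BForm Vx) : Set S :=
  OrderHom.gfp (sysFairInner δ Acc α (SysSt δ Acc α))

/-- Admissibility of an output function for the stable game: for every non-accepting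
`s ∈ W` and every `X`, the value `Y = ω(s, X)` satisfies
`(X ⊭ α ∨ δ(s,X∪Y) ∈ Sys_st ∪ Acc) ∧ δ(s,X∪Y) ∈ W ∪ Acc`. -/
def AdmissibleStable {Vx Vy S : Type} (δ : S → Set (Vx ⊕ Vy) → S) (Acc : Set S)
    (α : BForm Vx) (ω : S → Set Vx → Set Vy) : Prop :=
  ∀ s ∈ Wst δ Acc α, s ∉ Acc → ∀ X : Set Vx,
    (¬ α.eval X ∨ stepWith δ ω s X ∈ SysSt δ Acc α ∪ Acc) ∧
      stepWith δ ω s X ∈ Wst δ Acc α ∪ Acc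

/-! ### Realizability notions -/

/-- The infinite combined trace induced by environment sequence `lam` and agent
strategy `g`: position `i` carries `X_i ∪ g(X₀,…,X_i)`. -/
def inducedTrace {Vx Vy : Type} (g : List (Set Vx) → Set Vy) (lam : ℕ → Set Vx)
    (i : ℕ) : Set (Vx ⊕ Vy) :=
  combine (lam i) (g (histList lam (i + 1)))

/-- The finite trace `ρ^k = (X₀ ∪ g(X₀)), …, (X_k ∪ g(X₀,…,X_k))`. -/
def finPrefix {Vx Vy : Type} (g : List (Set Vx) → Set Vy) (lam : ℕ → Set Vx)
    (k : ℕ) : List (Set (Vx ⊕ Vy)) :=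
  (List.range (k + 1)).map (inducedTrace g lam)

/-- `φ` is `α`-fair realizable. -/
def fairRealizable {Vx Vy : Type} (α : BForm Vx) (φ : Formula (Vx ⊕ Vy)) : Prop :=
  ∃ g : List (Set Vx) → Set Vy, ∀ lam : ℕ → Set Vx,
    fairSeq α lam → ∃ k, Formula.finSat (finPrefix g lam k) φ

/-- `φ` is `α`-stable realizable. -/
def stableRealizable {Vx Vy : Type} (α : BForm Vx) (φ : Formula (Vx ⊕ Vy)) : Prop :=
  ∃ g : List (Set Vx) → Set Vy, ∀ lam : ℕ → Set Vx,
    stableSeq α lam → ∃ k, Formula.finSat (finPrefix g lam k) φ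

/-- `φ` is realizable under the LTL environment assumption `ψA`. -/
def realizableUnder {Vx Vy : Type} (ψA φ : Formula (Vx ⊕ Vy)) : Prop :=
  ∃ g : List (Set Vx) → Set Vy, ∀ lam : ℕ → Set Vx,
    Formula.infSat (inducedTrace g lam) ψA → ∃ k, Formula.finSat (finPrefix g lam k) φ

/-- Combine `X ⊆ Vx` with an agent assignment over `Y ∪ {alive}` (modeled as
`Option Vy`, with `alive = none`) into an assignment over `X ∪ Y ∪ {alive}`. -/
def combineA {Vx Vy : Type} (X : Set Vx) (Y' : Set (Option Vy)) :
    Set (Option (Vx ⊕ Vy)) :=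
  {v | match v with
       | none => none ∈ Y'
       | some (Sum.inl x) => x ∈ X
       | some (Sum.inr y) => some y ∈ Y'}

/-- LTL realizability of `ψ` over `X ∪ Y ∪ {alive}` w.r.t. `⟨X, Y ∪ {alive}⟩`,
where `alive` is controlled by the agent. -/
def ltlRealizable {Vx Vy : Type} (ψ : Formula (Option (Vx ⊕ Vy))) : Prop :=
  ∃ f : List (Set Vx) → Set (Option Vy), ∀ lam : ℕ → Set Vx,
    Formula.infSat (fun i => combineA (lam i) (f (histList lam (i + 1)))) ψ

lemma alive_mem_iff {P : Type} {τ : List (Set P)} {τ' : ℕ → Set (Option P)}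
    (h : extEquiv τ τ') (i : ℕ) : none ∈ τ' i ↔ i < τ.length := by
  constructor
  · intro hn
    by_contra hi
    rw [h.2 i (le_of_not_gt hi)] at hn
    exact hn
  · intro hi
    rw [h.1 i hi]
    exact Set.mem_insert _ _

lemma key_equiv {P : Type} {τ : List (Set P)} {τ' : ℕ → Set (Option P)}
    (h : extEquiv τ τ') (φ : Formula P) :
    ∀ i, i < τ.length → (Formula.finSatAt τ φ i ↔ Formula.infSatAt τ' (t φ) i) := by
  induction φ with
  | tt => intro i hi; simp [Formula.finSatAt, Formula.infSatAt, t]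
  | atom a =>
    intro i hi
    simp [Formula.finSatAt, Formula.infSatAt, t, h.1 i hi]
  | not φ ih =>
    intro i hi
    simp only [Formula.finSatAt, Formula.infSatAt, t, ih i hi]
  | and φ ψ ih1 ih2 =>
    intro i hi
    simp only [Formula.finSatAt, Formula.infSatAt, t, ih1 i hi, ih2 i hi]
  | next φ ih =>
    intro i hi
    show (i + 1 < τ.length ∧ _) ↔ (none ∈ τ' (i+1) ∧ _)
    rw [alive_mem_iff h (i+1)]
    constructor
    · rintro ⟨h1, h2⟩; exact ⟨h1, (ih _ h1).1 h2⟩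
    · rintro ⟨h1, h2⟩; exact ⟨h1, (ih _ h1).2 h2⟩
  | until_ φ ψ ih1 ih2 =>
    intro i hi
    constructor
    · rintro ⟨j, hij, hj, hψ, hφ⟩
      exact ⟨j, hij, ⟨(alive_mem_iff h j).2 hj, (ih2 j hj).1 hψ⟩,
        fun k hik hkj => (ih1 k (lt_trans hkj hj)).1 (hφ k hik hkj)⟩
    · rintro ⟨j, hij, ⟨hn, hψ⟩, hφ⟩
      have hj := (alive_mem_iff h j).1 hn
      exact ⟨j, hij, hj, (ih2 j hj).2 hψ,
        fun k hik hkj => (ih1 k (lt_trans hkj hj)).2 (hφ k hik hkj)⟩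

end LTLfSynth
open LTLfSynth in
/-- For every LTLf formula `φ` over `P`, every nonempty finite trace `τ`
over `P` and every infinite trace `τ'` over `P ∪ {alive}` with `τ ≈ τ'`:
`τ ⊨ φ` iff `τ' ⊨ ψ`, where `ψ = t(φ) ∧ alive ∧ (alive U G ¬alive)`. -/
theorem lemma_sat_equiv {P : Type} (φ : Formula P) (τ : List (Set P)) (hτ : τ ≠ [])
    (τ' : ℕ → Set (Option P)) (h : extEquiv τ τ') :
    Formula.finSat τ φ ↔ Formula.infSat τ' (transLTL φ) := by
  have h0 : 0 < τ.length := List.length_pos_iff.mpr hτ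
  simp only [Formula.finSat, Formula.infSat, transLTL, alive, Formula.G, Formula.F,
    Formula.infSatAt]
  constructor
  · intro hf
    refine ⟨(key_equiv h φ 0 h0).1 hf, (alive_mem_iff h 0).2 h0, τ.length, Nat.zero_le _,
      ?_, fun k _ hk => (alive_mem_iff h k).2 hk⟩
    rintro ⟨m, hm, hmm, -⟩
    exact hmm fun hn => absurd ((alive_mem_iff h m).1 hn) (by omega)
  · rintro ⟨h1, -, -⟩
    exact (key_equiv h φ 0 h0).2 h1
end

section
/- Let ⟨X, Y, α, φ⟩ be a fair LTLf synthesis problem and let G_φ be a DFA over alphabet 2^{X∪Y} that accepts exactly the nonempty finite traces satisfying φ. Then φ is α-fair realizable if and only if the fair DFA game ⟨G_φ, α⟩ is realizable for the agent, i.e., the initial state s₀ of G_φ is an agent winning state of the fair DFA game. -/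
namespace LTLfSynth

lemma playState_eq_foldl {Vx Vy S : Type} (δ : S → Set (Vx ⊕ Vy) → S)
    (g : List (Set Vx) → Set Vy) (s₀ : S) (lam : ℕ → Set Vx) (k : ℕ) :
    playState δ g s₀ lam (k + 1) = (finPrefix g lam k).foldl δ s₀ := by
  induction k with
  | zero => simp [playState, finPrefix, inducedTrace, List.range_succ]
  | succ k ih =>
    have h : finPrefix g lam (k + 1) = finPrefix g lam k ++ [inducedTrace g lam (k + 1)] := by
      simp [finPrefix, List.range_succ]
    rw [h, List.foldl_append, ← ih]
    rfl

end LTLfSynth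
open LTLfSynth in
/-- The fair LTLf synthesis problem `⟨X, Y, α, φ⟩` is realizable iff
the fair DFA game `⟨G_φ, α⟩` is realizable for the agent, where `G_φ` accepts exactly
the nonempty finite traces satisfying `φ`. -/
theorem fair_synthesis_iff_fair_game {Vx Vy S : Type} [Fintype Vx] [Fintype Vy] [Fintype S]
    (α : BForm Vx) (φ : Formula (Vx ⊕ Vy))
    (s₀ : S) (δ : S → Set (Vx ⊕ Vy) → S) (Acc : Set S)
    (hDFA : ∀ w : List (Set (Vx ⊕ Vy)), w.foldl δ s₀ ∈ Acc ↔ w ≠ [] ∧ Formula.finSat w φ) :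
    fairRealizable α φ ↔ agentWinsFairFrom δ Acc α s₀ := by
  constructor
  · rintro ⟨g, hg⟩
    refine ⟨g, fun lam => ?_⟩
    by_cases hf : fairSeq α lam
    · obtain ⟨k, hk⟩ := hg lam hf
      refine Or.inr ⟨k + 1, ?_⟩
      rw [playState_eq_foldl, hDFA]
      exact ⟨by simp [finPrefix], hk⟩
    · exact Or.inl hf
  · rintro ⟨g, hg⟩
    refine ⟨g, fun lam hf => ?_⟩
    rcases hg lam with h | ⟨j, hj⟩
    · exact absurd hf h
    · cases j with
      | zero =>
        exfalso
        have := (hDFA []).mp hj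
        simp at this
      | succ k =>
        rw [playState_eq_foldl, hDFA] at hj
        exact ⟨k, hj.2⟩
end

section
/- Let S be a set, Acc ⊆ S, δ : S × 2^{X∪Y} → S, and α an environment constraint over X. Then Sys_f = S ∖ Env_f, i.e., the nested least/greatest fixpoint Sys_f is exactly the complement in S of the nested greatest/least fixpoint Env_f. -/
section Dual

variable {S : Type}

lemma lfp_compl_gfp {f g : Set S →o Set S} (h : ∀ A, g A = (f Aᶜ)ᶜ) :
    OrderHom.lfp g = (OrderHom.gfp f)ᶜ := by
  apply le_antisymm
  · apply OrderHom.lfp_le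
    rw [h, compl_compl, OrderHom.map_gfp]
  · have hfix : f (OrderHom.lfp g)ᶜ = (OrderHom.lfp g)ᶜ := by
      have h2 := h (OrderHom.lfp g)
      rw [OrderHom.map_lfp] at h2
      simpa using congrArg compl h2.symm
    have := OrderHom.le_gfp f hfix.ge
    calc (OrderHom.gfp f)ᶜ ≤ (OrderHom.lfp g)ᶜᶜ := compl_le_compl this
    _ = OrderHom.lfp g := compl_compl _

lemma gfp_compl_lfp {f g : Set S →o Set S} (h : ∀ A, g A = (f Aᶜ)ᶜ) :
    OrderHom.gfp g = (OrderHom.lfp f)ᶜ := by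
  have h' : ∀ A : Set S, f A = (g Aᶜ)ᶜ := by
    intro A; rw [h, compl_compl, compl_compl]
  rw [lfp_compl_gfp h', compl_compl]

end Dual

open LTLfSynth in
lemma sysStep_compl {Vx Vy S : Type} (δ : S → Set (Vx ⊕ Vy) → S) (Acc : Set S)
    (α : BForm Vx) (A B : Set S) :
    sysStep δ Acc α A B = (envStep δ Acc α Aᶜ Bᶜ)ᶜ := by
  ext s
  simp only [sysStep, envStep, Set.mem_setOf_eq, Set.mem_compl_iff, Set.mem_diff,
    Set.mem_union, not_exists, not_forall, not_or, not_and]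
  constructor <;> intro hs X <;> obtain ⟨Y, h1, h2⟩ := hs X <;>
    exact ⟨Y, by tauto, by tauto⟩

open LTLfSynth in
lemma sysFairOuter_compl {Vx Vy S : Type} (δ : S → Set (Vx ⊕ Vy) → S) (Acc : Set S)
    (α : BForm Vx) (Z : Set S) :
    sysFairOuter δ Acc α Z = ((envFairOuter δ Acc α) Zᶜ)ᶜ := by
  show OrderHom.gfp (sysFairInner δ Acc α Z) = (OrderHom.lfp (envFairInner δ Acc α Zᶜ))ᶜ
  apply gfp_compl_lfp
  intro A
  show sysStep δ Acc α Z A = (envStep δ Acc α Zᶜ Aᶜ)ᶜ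
  rw [sysStep_compl]

open LTLfSynth in
/-- `Sys_f = S ∖ Env_f`. -/
theorem sysFair_eq_compl_envFair {Vx Vy S : Type} [Fintype Vx] [Fintype Vy]
    (δ : S → Set (Vx ⊕ Vy) → S) (Acc : Set S) (α : BForm Vx) :
    SysFair δ Acc α = (EnvFair δ Acc α)ᶜ := by
  unfold SysFair EnvFair
  apply lfp_compl_gfp
  intro A
  rw [sysFairOuter_compl]
end

section
/- Let S be a set, Acc ⊆ S, δ : S × 2^{X∪Y} → S, and α an environment constraint over X. Then Sys_st = S ∖ Env_st, i.e., the nested greatest/least fixpoint Sys_st is exactly the complement in S of the nested least/greatest fixpoint Env_st. -/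
/-!
Complementation is an order-reversing involution of `Set S`, so it exchanges least and greatest
fixpoints: the greatest fixpoint of the De Morgan dual `A ↦ (f Aᶜ)ᶜ` of a monotone `f` is the
complement of the least fixpoint of `f`, and vice versa. Swapping `∃/∀` and `∧/∨`, the step
operator of `Sys_st` is the De Morgan dual of that of `Env_st` in both arguments, so the exchange
is applied once to the inner and once to the outer fixpoint.
-/

namespace OrderHom

variable {α : Type*} [CompleteBooleanAlgebra α]

def complConj (f : α →o α) : α →o α :=
  ⟨fun a => (f aᶜ)ᶜ, fun _ _ h => compl_le_compl (f.mono (compl_le_compl h))⟩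

@[simp]
lemma complConj_apply (f : α →o α) (a : α) : f.complConj a = (f aᶜ)ᶜ := rfl

@[simp]
lemma complConj_complConj (f : α →o α) : f.complConj.complConj = f := by
  ext a
  simp

theorem gfp_complConj (f : α →o α) : f.complConj.gfp = f.lfpᶜ := by
  refine le_antisymm (le_compl_comm.mpr (f.lfp_le ?_)) (le_gfp _ ?_)
  · exact (compl_eq_comm.mp f.complConj.map_gfp).ge
  · simp [map_lfp]

theorem lfp_complConj (f : α →o α) : f.complConj.lfp = f.gfpᶜ := by
  rw [← compl_compl f.complConj.lfp, ← gfp_complConj, complConj_complConj]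

end OrderHom

namespace LTLfSynth

variable {Vx Vy S : Type} (δ : S → Set (Vx ⊕ Vy) → S) (Acc : Set S) (α : BForm Vx)

theorem sysStep_eq_compl_envStep (A B : Set S) :
    sysStep δ Acc α A B = (envStep δ Acc α Aᶜ Bᶜ)ᶜ := by
  ext s
  simp only [sysStep, envStep, Set.mem_ofPred_eq, Set.mem_compl_iff, Set.mem_sdiff, Set.mem_union]
  push Not
  refine forall_congr' fun X => exists_congr fun Y => ?_
  tauto

theorem sysStInner_eq_complConj (Z : Set S) :
    sysStInner δ Acc α Z = (envStInner δ Acc α Zᶜ).complConj :=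
  OrderHom.ext _ _ (funext fun A => sysStep_eq_compl_envStep δ Acc α A Z)

theorem sysStOuter_eq_complConj :
    sysStOuter δ Acc α = (envStOuter δ Acc α).complConj := by
  refine OrderHom.ext _ _ (funext fun Z => ?_)
  change OrderHom.lfp (sysStInner δ Acc α Z) = (OrderHom.gfp (envStInner δ Acc α Zᶜ))ᶜ
  rw [sysStInner_eq_complConj, OrderHom.lfp_complConj]

end LTLfSynth

open LTLfSynth in
theorem sysSt_eq_compl_envSt_general {Vx Vy S : Type}
    (δ : S → Set (Vx ⊕ Vy) → S) (Acc : Set S) (α : BForm Vx) :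
    SysSt δ Acc α = (EnvSt δ Acc α)ᶜ := by
  rw [SysSt, EnvSt, sysStOuter_eq_complConj, OrderHom.gfp_complConj]

open LTLfSynth in
/-- `Sys_st = S ∖ Env_st`. -/
theorem sysSt_eq_compl_envSt {Vx Vy S : Type} [Fintype Vx] [Fintype Vy]
    (δ : S → Set (Vx ⊕ Vy) → S) (Acc : Set S) (α : BForm Vx) :
    SysSt δ Acc α = (EnvSt δ Acc α)ᶜ :=
  sysSt_eq_compl_envSt_general δ Acc α
end

section
/- Let φ be an LTLf formula over X ∪ Y and ψ = t(φ) ∧ alive ∧ (alive U G¬alive) its translated LTL formula over X ∪ Y ∪ {alive}, where alive is a fresh atom assigned to the agent. Then φ is α-fair realizable with respect to ⟨X, Y⟩ if and only if the LTL formula GFα → ψ is realizable with respect to ⟨X, Y ∪ {alive}⟩. -/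
/-!
Given an `α`-fair LTLf strategy `g`, the LTL strategy plays `g` on `Y` and keeps `alive` on
exactly up to the first position `k` at which the trace played so far satisfies `φ`; that `k`
exists on every fair play. Conversely, `alive ∧ (alive U G ¬alive)` forces `alive` to mark a
prefix `[0, k]`, and on such a trace `t φ` holds at `i ≤ k` exactly when `φ` holds at `i` of the
finite trace of length `k + 1`.
-/

namespace LTLfSynth

namespace Formula

variable {P : Type}

@[simp]
lemma infSatAt_F (τ : ℕ → Set P) (φ : Formula P) (i : ℕ) :
    infSatAt τ (F φ) i ↔ ∃ j, i ≤ j ∧ infSatAt τ φ j := by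
  simp [F, infSatAt]

@[simp]
lemma infSatAt_G (τ : ℕ → Set P) (φ : Formula P) (i : ℕ) :
    infSatAt τ (G φ) i ↔ ∀ j, i ≤ j → infSatAt τ φ j := by
  simp [G, F, infSatAt]

@[simp]
lemma infSatAt_imp (τ : ℕ → Set P) (φ ψ : Formula P) (i : ℕ) :
    infSatAt τ (imp φ ψ) i ↔ (infSatAt τ φ i → infSatAt τ ψ i) := by
  simp only [imp, Formula.or, infSatAt]
  tauto

@[simp]
lemma infSatAt_toFormula {V : Type} (emb : V → P) (b : BForm V) (τ : ℕ → Set P) (i : ℕ) :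
    infSatAt τ (b.toFormula emb) i ↔ b.eval {v | emb v ∈ τ i} := by
  induction b with
  | tt => simp [BForm.toFormula, BForm.eval, infSatAt]
  | atom v => simp [BForm.toFormula, BForm.eval, infSatAt]
  | not b ih => simp [BForm.toFormula, BForm.eval, infSatAt, ih]
  | and b c ihb ihc => simp [BForm.toFormula, BForm.eval, infSatAt, ihb, ihc]

end Formula

open Formula

section Translation

variable {P : Type}

def truncation (τ : ℕ → Set (Option P)) (k : ℕ) : List (Set P) :=
  (List.range (k + 1)).map fun j => {p | some p ∈ τ j}

lemma getD_map_range {A : Type} (f : ℕ → A) (d : A) {n i : ℕ} (hi : i < n) :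
    ((List.range n).map f).getD i d = f i := by
  rw [List.getD_eq_getElem _ _ (by simpa)]
  simp

lemma infSatAt_t_iff_finSatAt_truncation {τ : ℕ → Set (Option P)} {k : ℕ}
    (hτ : ∀ i, none ∈ τ i ↔ i ≤ k) (φ : Formula P) {i : ℕ} (hi : i ≤ k) :
    infSatAt τ (t φ) i ↔ finSatAt (truncation τ k) φ i := by
  induction φ generalizing i with
  | tt => simp [t, infSatAt, finSatAt]
  | atom a =>
    simp only [t, infSatAt, finSatAt, truncation, getD_map_range _ _ (Nat.lt_succ_of_le hi)]
    rfl
  | not φ ih => simp only [t, infSatAt, finSatAt, ih hi]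
  | and φ ψ ihφ ihψ => simp only [t, infSatAt, finSatAt, ihφ hi, ihψ hi]
  | next φ ih =>
    simp only [t, infSatAt, finSatAt, alive, truncation, List.length_map, List.length_range, hτ]
    constructor
    · rintro ⟨hlt, hφ⟩
      exact ⟨by omega, (ih hlt).1 hφ⟩
    · rintro ⟨hlt, hφ⟩
      exact ⟨by omega, (ih (by omega)).2 hφ⟩
  | until_ φ ψ ihφ ihψ =>
    simp only [t, infSatAt, finSatAt, alive, truncation, List.length_map, List.length_range, hτ]
    constructor
    · rintro ⟨j, hij, ⟨hjk, hψ⟩, hφ⟩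
      exact ⟨j, hij, by omega, (ihψ hjk).1 hψ, fun m him hmj => (ihφ (by omega)).1 (hφ m him hmj)⟩
    · rintro ⟨j, hij, hjk, hψ, hφ⟩
      exact ⟨j, hij, ⟨by omega, (ihψ (by omega)).2 hψ⟩,
        fun m him hmj => (ihφ (by omega)).2 (hφ m him hmj)⟩

lemma infSatAt_alive_and_until_G_not_alive_iff (τ : ℕ → Set (Option P)) :
    infSatAt τ (.and alive (.until_ alive (G (.not alive)))) 0 ↔
      ∃ k, ∀ i, none ∈ τ i ↔ i ≤ k := by
  simp only [infSatAt, infSatAt_G, alive]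
  constructor
  · rintro ⟨h0, j, -, hdead, halive⟩
    have hj : 0 < j := Nat.pos_of_ne_zero fun hj => hdead 0 hj.le h0
    refine ⟨j - 1, fun i => ⟨fun hi => ?_, fun hi => halive i i.zero_le (by omega)⟩⟩
    by_contra hij
    exact hdead i (by omega) hi
  · rintro ⟨k, hk⟩
    exact ⟨(hk 0).2 k.zero_le, k + 1, (k + 1).zero_le, fun i hi h => by have := (hk i).1 h; omega,
      fun i _ hi => (hk i).2 (by omega)⟩

lemma infSat_transLTL_iff (τ : ℕ → Set (Option P)) (φ : Formula P) :
    infSat τ (transLTL φ) ↔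
      ∃ k, (∀ i, none ∈ τ i ↔ i ≤ k) ∧ finSat (truncation τ k) φ := by
  rw [infSat, transLTL, infSatAt, infSatAt_alive_and_until_G_not_alive_iff]
  constructor
  · rintro ⟨hφ, k, hk⟩
    exact ⟨k, hk, (infSatAt_t_iff_finSatAt_truncation hk φ k.zero_le).1 hφ⟩
  · rintro ⟨k, hk, hφ⟩
    exact ⟨(infSatAt_t_iff_finSatAt_truncation hk φ k.zero_le).2 hφ, k, hk⟩

end Translation

section Strategies

variable {Vx Vy : Type}

def ltlTrace (f : List (Set Vx) → Set (Option Vy)) (lam : ℕ → Set Vx) :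
    ℕ → Set (Option (Vx ⊕ Vy)) :=
  fun i => combineA (lam i) (f (histList lam (i + 1)))

def agentPart (f : List (Set Vx) → Set (Option Vy)) (l : List (Set Vx)) : Set Vy :=
  {y | some y ∈ f l}

lemma truncation_ltlTrace (f : List (Set Vx) → Set (Option Vy)) (lam : ℕ → Set Vx) (k : ℕ) :
    truncation (ltlTrace f lam) k = finPrefix (agentPart f) lam k := by
  refine List.map_congr_left fun i _ => Set.ext fun p => ?_
  cases p <;> rfl

lemma infSat_GF_ltlTrace_iff (α : BForm Vx) (f : List (Set Vx) → Set (Option Vy))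
    (lam : ℕ → Set Vx) :
    infSat (ltlTrace f lam) (G (F (α.toFormula fun x => some (Sum.inl x)))) ↔ fairSeq α lam := by
  simp only [infSat, infSatAt_G, infSatAt_F, infSatAt_toFormula, zero_le, true_implies]
  rfl

lemma infSat_ltlTrace_iff (α : BForm Vx) (φ : Formula (Vx ⊕ Vy))
    (f : List (Set Vx) → Set (Option Vy)) (lam : ℕ → Set Vx) :
    infSat (ltlTrace f lam)
        (imp (G (F (α.toFormula fun x => some (Sum.inl x)))) (transLTL φ)) ↔
      (fairSeq α lam → ∃ k, (∀ i, none ∈ ltlTrace f lam i ↔ i ≤ k) ∧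
        finSat (finPrefix (agentPart f) lam k) φ) := by
  rw [infSat, infSatAt_imp, ← infSat, ← infSat, infSat_GF_ltlTrace_iff, infSat_transLTL_iff]
  simp only [truncation_ltlTrace]

lemma finPrefix_congr (g : List (Set Vx) → Set Vy) {lam lam' : ℕ → Set Vx} {k : ℕ}
    (h : ∀ i ≤ k, lam i = lam' i) : finPrefix g lam k = finPrefix g lam' k := by
  refine List.map_congr_left fun i hi => ?_
  have hik : i ≤ k := Nat.le_of_lt_succ (List.mem_range.1 hi)
  have hhist : histList lam (i + 1) = histList lam' (i + 1) :=
    List.map_congr_left fun j hj => h j (by have := List.mem_range.1 hj; omega)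
  simp only [inducedTrace, h i hik, hhist]

/-- `alive` stays on until the trace played so far satisfies `φ`; on a history `l`, the sequence
`fun i => l.getD i ∅` replays the environment. -/
def withAlive (g : List (Set Vx) → Set Vy) (φ : Formula (Vx ⊕ Vy)) (l : List (Set Vx)) :
    Set (Option Vy) :=
  {o | o.elim (∀ m, m + 1 < l.length → ¬ finSat (finPrefix g (fun i => l.getD i ∅) m) φ)
    (· ∈ g l)}

lemma alive_mem_ltlTrace_withAlive_iff (g : List (Set Vx) → Set Vy) (φ : Formula (Vx ⊕ Vy))
    (lam : ℕ → Set Vx) (i : ℕ) :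
    none ∈ ltlTrace (withAlive g φ) lam i ↔ ∀ m < i, ¬ finSat (finPrefix g lam m) φ := by
  have hlen : (histList lam (i + 1)).length = i + 1 := by simp [histList]
  have hreplay : ∀ m < i, finPrefix g (fun j => (histList lam (i + 1)).getD j ∅) m =
      finPrefix g lam m := fun m hm =>
    finPrefix_congr g fun j hj => getD_map_range lam ∅ (by omega)
  show (∀ m, m + 1 < _ → _) ↔ _
  rw [hlen]
  exact forall_congr' fun m => ⟨fun h hm => hreplay m hm ▸ h (by omega),
    fun h hm => hreplay m (by omega) ▸ h (by omega)⟩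

end Strategies

end LTLfSynth
open LTLfSynth in
theorem fair_realizable_iff_ltl_realizable_general {Vx Vy : Type}
    (α : BForm Vx) (φ : Formula (Vx ⊕ Vy)) :
    fairRealizable α φ ↔
      ltlRealizable (Vx := Vx) (Vy := Vy)
        (Formula.imp (Formula.G (Formula.F (α.toFormula (fun x => some (Sum.inl x)))))
          (transLTL φ)) := by
  classical
  constructor
  · rintro ⟨g, hg⟩
    refine ⟨withAlive g φ, fun lam => (infSat_ltlTrace_iff α φ _ lam).2 fun hfair => ?_⟩
    have hwin := hg lam hfair
    refine ⟨Nat.find hwin, fun i => ?_, Nat.find_spec hwin⟩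
    rw [alive_mem_ltlTrace_withAlive_iff, Nat.le_find_iff]
  · rintro ⟨f, hf⟩
    refine ⟨agentPart f, fun lam hfair => ?_⟩
    obtain ⟨k, -, hk⟩ := (infSat_ltlTrace_iff α φ f lam).1 (hf lam) hfair
    exact ⟨k, hk⟩

open LTLfSynth in
/-- `φ` is `α`-fair realizable w.r.t. `⟨X, Y⟩` iff the LTL formula
`GFα → ψ` is realizable w.r.t. `⟨X, Y ∪ {alive}⟩`, where
`ψ = t(φ) ∧ alive ∧ (alive U G ¬alive)`. -/
theorem fair_realizable_iff_ltl_realizable {Vx Vy : Type} [Fintype Vx] [Fintype Vy]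
    (α : BForm Vx) (φ : Formula (Vx ⊕ Vy)) :
    fairRealizable α φ ↔
      ltlRealizable (Vx := Vx) (Vy := Vy)
        (Formula.imp (Formula.G (Formula.F (α.toFormula (fun x => some (Sum.inl x)))))
          (transLTL φ)) :=
  fair_realizable_iff_ltl_realizable_general α φ
end
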